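/- Let d = 2k be even and let (d_{2j})_{j=1}^{m_2}, (d_{3j})_{j=1}^{m_3} be partitions of 2k with m_2 + m_3 = 2k, all parts of (d_{2j}) even, and suppose it is not the case that (d_{2j}) = (2,...,2) with (d_{3j}) ∈ {(2,...,2), (k+1,1,...,1)}. Then (d_{3j}) refines the partition (k,k). -/

import Mathlib

/-!
Call a list complete if each entry exceeds the sum of the entries after it by at most one; the
subsums of a complete list fill the whole interval `[0, sum]`, by induction on the list. Since
the parts of `p2` are at least `2`, `p3` has at least `k` parts. If the non-increasing list `p3`
is not complete, some part exceeds the sum of the later parts by two or more; counting parts and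
their sizes then forces `p3` to have exactly `k` parts and to be `(2, …, 2)` or
`(k + 1, 1, …, 1)`, and then `p2` has `k` parts, all equal to `2`.
-/

def IsPartition (d : ℕ) (l : List ℕ) : Prop :=
  l.Pairwise (· ≥ ·) ∧ (∀ x ∈ l, 0 < x) ∧ l.sum = d

def RefinesKK (y : List ℕ) (k : ℕ) : Prop :=
  ∃ l₁ l₂ : List ℕ, (l₁ ++ l₂).Perm y ∧ l₁.sum = k ∧ l₂.sum = k

open List

namespace List

theorem eq_replicate_of_forall_le_of_sum_le {l : List ℕ} {n c : ℕ} (hle : ∀ x ∈ l, c ≤ x)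
    (hlen : l.length = n) (hsum : l.sum ≤ n * c) : l = replicate n c := by
  refine eq_replicate_iff.mpr ⟨hlen, fun x hx => ?_⟩
  have hperm := perm_cons_erase hx
  have hrest := card_nsmul_le_sum (l.erase x) c fun y hy => hle y (mem_of_mem_erase hy)
  have hlen' := hperm.length_eq
  have hsum' := hperm.sum_eq
  simp only [length_cons, sum_cons, smul_eq_mul] at hlen' hsum' hrest
  have := hle x hx
  nlinarith

theorem exists_sublist_sum_eq {l : List ℕ} (hl : ∀ a t, a :: t <:+ l → a ≤ t.sum + 1) {n : ℕ}
    (hn : n ≤ l.sum) : ∃ u, u <+ l ∧ u.sum = n := by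
  induction l generalizing n with
  | nil => exact ⟨[], Sublist.slnil, by simp_all⟩
  | cons a t ih =>
    have ht : ∀ b s, b :: s <:+ t → b ≤ s.sum + 1 := fun b s h =>
      hl b s (suffix_cons_iff.mpr (Or.inr h))
    have ha := hl a t suffix_rfl
    rw [sum_cons] at hn
    by_cases hnt : n ≤ t.sum
    · obtain ⟨u, hu, hsum⟩ := ih ht hnt
      exact ⟨u, hu.cons a, hsum⟩
    · obtain ⟨u, hu, hsum⟩ := ih ht (n := n - a) (by omega)
      exact ⟨a :: u, hu.cons_cons a, by rw [sum_cons, hsum]; omega⟩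

end List

theorem refinesKK_of_sublist {p u : List ℕ} {k : ℕ} (hu : u <+ p) (husum : u.sum = k)
    (hpsum : p.sum = 2 * k) : RefinesKK p k := by
  obtain ⟨v, hv⟩ := hu.exists_perm_append
  have := hv.sum_eq
  rw [sum_append] at this
  exact ⟨u, v, hv.symm, husum, by omega⟩

theorem IsPartition.eq_of_suffix_of_sum_add_one_lt {k : ℕ} {p : List ℕ}
    (hp : IsPartition (2 * k) p) (hlen : k ≤ p.length) {a : ℕ} {t : List ℕ} (hsuf : a :: t <:+ p)
    (hgap : t.sum + 1 < a) :
    p.length = k ∧ (p = replicate k 2 ∨ p = (k + 1) :: replicate (k - 1) 1) := by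
  obtain ⟨hsort, hpos, hsum⟩ := hp
  obtain ⟨pre, rfl⟩ := hsuf
  have hpre_ge : ∀ x ∈ pre, a ≤ x := fun x hx =>
    (pairwise_append.mp hsort).2.2 x hx a mem_cons_self
  have hpre : pre.length * a ≤ pre.sum := by simpa using pre.card_nsmul_le_sum a hpre_ge
  have ht_pos : ∀ x ∈ t, 1 ≤ x := fun x hx => hpos x (mem_append_right _ (mem_cons_of_mem a hx))
  have ht := t.length_le_sum_of_one_le ht_pos
  simp only [length_append, length_cons, sum_append, sum_cons] at hlen hsum ⊢
  by_cases hpre0 : pre = []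
  · subst hpre0
    simp only [length_nil, sum_nil, zero_add, nil_append] at hlen hsum ⊢
    refine ⟨by omega, Or.inr ?_⟩
    rw [eq_replicate_of_forall_le_of_sum_le ht_pos (n := k - 1) (by omega) (by omega)]
    congr 1
    omega
  · have hi : 1 ≤ pre.length := length_pos_iff.mpr hpre0
    have hr : t.length = 0 := by nlinarith
    obtain rfl := length_eq_zero_iff.mp hr
    simp only [length_nil, sum_nil, add_zero] at hlen hsum hgap
    have ha : a = 2 := by nlinarith
    have hk : pre.length + 1 = k := by nlinarith
    refine ⟨by omega, Or.inl (eq_replicate_of_forall_le_of_sum_le (fun x hx => ?_)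
      (by simp [hk]) (by simp only [sum_append, sum_cons, sum_nil, add_zero]; omega))⟩
    rcases mem_append.mp hx with hx | hx
    · exact ha ▸ hpre_ge x hx
    · rw [mem_singleton.mp hx, ha]

theorem stmt13_general (k : ℕ) (p2 p3 : List ℕ)
    (h2 : IsPartition (2 * k) p2) (h3 : IsPartition (2 * k) p3)
    (hlen : p2.length + p3.length = 2 * k)
    (heven : ∀ x ∈ p2, Even x)
    (hexc : ¬(p2 = List.replicate k 2 ∧
      (p3 = List.replicate k 2 ∨ p3 = (k + 1) :: List.replicate (k - 1) 1))) :
    RefinesKK p3 k := by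
  obtain ⟨-, h2pos, h2sum⟩ := h2
  have h2two : ∀ x ∈ p2, 2 ≤ x := fun x hx => by
    obtain ⟨c, hc⟩ := heven x hx
    have := h2pos x hx
    omega
  have hp2len : p2.length * 2 ≤ 2 * k := by
    simpa [h2sum] using p2.card_nsmul_le_sum 2 h2two
  by_cases hcomplete : ∀ a t, a :: t <:+ p3 → a ≤ t.sum + 1
  · obtain ⟨u, hu, husum⟩ := exists_sublist_sum_eq hcomplete (n := k) (by rw [h3.2.2]; omega)
    exact refinesKK_of_sublist hu husum h3.2.2
  push Not at hcomplete
  obtain ⟨a, t, hsuf, hgap⟩ := hcomplete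
  obtain ⟨hp3len, hp3⟩ := h3.eq_of_suffix_of_sum_add_one_lt (by omega) hsuf hgap
  exact absurd ⟨eq_replicate_of_forall_le_of_sum_le h2two (by omega) (by omega), hp3⟩ hexc

theorem stmt13 (k : ℕ) (hk : 1 ≤ k) (p2 p3 : List ℕ)
    (h2 : IsPartition (2 * k) p2) (h3 : IsPartition (2 * k) p3)
    (hlen : p2.length + p3.length = 2 * k)
    (heven : ∀ x ∈ p2, Even x)
    (hexc : ¬(p2 = List.replicate k 2 ∧
      (p3 = List.replicate k 2 ∨ p3 = (k + 1) :: List.replicate (k - 1) 1))) :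
    RefinesKK p3 k :=
  stmt13_general k p2 p3 h2 h3 hlen heven hexc
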